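/- arXiv:1810.08814 — 2 statements merged into one kernel-verified Lean document; each statement's English description precedes it below -/
import Mathlib

section
/- In the setting of the previous statement, assume further ord(s) = 0 (the non-superspecial case). Then ϖ(a₀/b₁)^{p+1} and ϖ s^{p+1}/t^p are units in the valuation ring with the same reduction to the residue field, where ϖ is any element with ord(ϖ) = 1. -/
/-!
The relations give `(a₁/b₀)^(p²) = a₁/b₀ + c` with `c = s^p/b₀^(p(p-1))`, and `b₀^(p²) = b₀ t^p`
gives `ord b₀ = 1/(p²-1)`, so `ord c = -p/(p+1) < 0`. The Newton polygon of `X^(p²) - X - c`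
then forces `ord (a₁/b₀) = -1/(p(p+1))`, hence `ord (a₀/b₁) = -1/(p+1)` and
`ϖ(a₀/b₁)^(p+1)` is a unit. Expanding `(a₀/b₁)^(p+1)` with the relations, the difference of the
two units is `ϖ(a₀/b₁)(a₁/b₀) + ϖ(a₀/b₀ - s)s^p/t^p`; since Frobenius is additive,
`(a₀/b₀ - s)^p = (a₁/b₀)(b₀t^p/b₁)`, and both summands have positive valuation.
-/

structure IsRealAddValuation {K : Type*} [Field K] (ord : K → ℝ) : Prop where
  map_mul : ∀ x y : K, x ≠ 0 → y ≠ 0 → ord (x * y) = ord x + ord y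
  min_le_map_add : ∀ x y : K, x ≠ 0 → y ≠ 0 → x + y ≠ 0 → min (ord x) (ord y) ≤ ord (x + y)

namespace IsRealAddValuation

variable {K : Type*} [Field K] {ord : K → ℝ} {x y : K}

theorem map_one (hord : IsRealAddValuation ord) : ord 1 = 0 := by
  have := hord.map_mul 1 1 one_ne_zero one_ne_zero
  rw [one_mul] at this
  linarith

theorem map_pow (hord : IsRealAddValuation ord) (hx : x ≠ 0) (n : ℕ) :
    ord (x ^ n) = n * ord x := by
  induction n with
  | zero => simp [hord.map_one]
  | succ n ih =>
    rw [pow_succ, hord.map_mul _ _ (pow_ne_zero _ hx) hx, ih]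
    push_cast
    ring

theorem map_div (hord : IsRealAddValuation ord) (hx : x ≠ 0) (hy : y ≠ 0) :
    ord (x / y) = ord x - ord y := by
  have := hord.map_mul (x / y) y (div_ne_zero hx hy) hy
  rw [div_mul_cancel₀ _ hy] at this
  linarith

theorem map_neg (hord : IsRealAddValuation ord) (hx : x ≠ 0) : ord (-x) = ord x := by
  have h : 2 * ord (-1 : K) = 0 := by
    simpa [hord.map_one] using hord.map_pow (neg_ne_zero.2 (one_ne_zero (α := K))) 2
  rw [← neg_one_mul, hord.map_mul _ _ (neg_ne_zero.2 one_ne_zero) hx]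
  linarith

theorem map_add_of_lt (hord : IsRealAddValuation ord) (hx : x ≠ 0) (hy : y ≠ 0)
    (hlt : ord y < ord x) : ord (x + y) = ord y := by
  have hxy : x + y ≠ 0 := by
    rintro h
    rw [eq_neg_of_add_eq_zero_left h, hord.map_neg hy] at hlt
    exact hlt.false
  have hge := hord.min_le_map_add x y hx hy hxy
  have hle := hord.min_le_map_add (x + y) (-x) hxy (neg_ne_zero.2 hx) (by simpa using hy)
  rw [add_neg_cancel_comm, hord.map_neg hx] at hle
  rw [min_eq_right hlt.le] at hge
  rcases min_le_iff.1 hle with h | h <;> linarith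

theorem pos_map_add (hord : IsRealAddValuation ord) (hx : x ≠ 0) (hy : y ≠ 0) (hxy : x + y ≠ 0)
    (hx₀ : 0 < ord x) (hy₀ : 0 < ord y) : 0 < ord (x + y) :=
  (lt_min hx₀ hy₀).trans_le (hord.min_le_map_add x y hx hy hxy)

/-- The Newton polygon of `X ^ n - X - c` has a single slope when `ord c < 0`. -/
theorem map_eq_div_of_pow_eq_add (hord : IsRealAddValuation ord) {n : ℕ} {c : K} (hn : 1 < n)
    (hx : x ≠ 0) (hc : c ≠ 0) (hc₀ : ord c < 0) (h : x ^ n = x + c) : ord x = ord c / n := by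
  have hn' : (1 : ℝ) < n := by exact_mod_cast hn
  have hpow : n * ord x = ord (x + c) := by rw [← h, hord.map_pow hx]
  rw [eq_div_iff (by positivity)]
  rcases lt_trichotomy (ord x) (ord c) with hlt | heq | hgt
  · rw [add_comm, hord.map_add_of_lt hc hx hlt] at hpow
    nlinarith
  · have hsum := hord.min_le_map_add x c hx hc (h ▸ pow_ne_zero n hx)
    rw [← hpow, heq, min_self] at hsum
    nlinarith
  · rw [hord.map_add_of_lt hx hc hgt] at hpow
    linarith

end IsRealAddValuation

section NonSuperspecial

variable {p : ℕ} {K : Type*} [Field K] {ord : K → ℝ} {t s a₀ a₁ b₀ b₁ : K}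

theorem a₁_ne_zero (hp : p ≠ 0) (hs : s ≠ 0) (hb₀ : b₀ ≠ 0)
    (e₁ : a₀ ^ p = a₁ * t ^ p + b₁ * s ^ p) (e₂ : a₁ ^ p = a₀) (e₃ : b₀ ^ p = b₁) : a₁ ≠ 0 := by
  rintro rfl
  subst e₂ e₃
  simp [zero_pow hp, hs, hb₀] at e₁

theorem div_pow_sq_eq_add (hb₀ : b₀ ≠ 0) (e₁ : a₀ ^ p = a₁ * t ^ p + b₁ * s ^ p)
    (e₂ : a₁ ^ p = a₀) (e₃ : b₀ ^ p = b₁) (e₄ : b₁ ^ p = b₀ * t ^ p) :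
    (a₁ / b₀) ^ (p ^ 2) = a₁ / b₀ + s ^ p / b₀ ^ (p * (p - 1)) := by
  have hb₀sq : b₀ ^ (p ^ 2) = b₀ * t ^ p := by rw [sq, pow_mul, e₃, e₄]
  have htp : t ^ p ≠ 0 := by
    intro h
    rw [h, mul_zero] at hb₀sq
    exact pow_ne_zero _ hb₀ hb₀sq
  have hsplit : b₀ ^ (p ^ 2) = b₁ * b₀ ^ (p * (p - 1)) := by
    rw [← e₃, ← pow_add, Nat.mul_sub_one, sq, Nat.add_sub_cancel' (Nat.le_mul_self p)]
  have hb₁ : b₁ ≠ 0 := e₃ ▸ pow_ne_zero p hb₀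
  rw [div_pow, sq, pow_mul, e₂, e₁, add_div, ← sq]
  congr 1
  · rw [hb₀sq, mul_div_mul_right _ _ htp]
  · rw [hsplit, mul_div_mul_left _ _ hb₁]

theorem div_sub_pow_eq [CharP K p] [Fact p.Prime] (hb₀ : b₀ ≠ 0)
    (e₁ : a₀ ^ p = a₁ * t ^ p + b₁ * s ^ p) (e₃ : b₀ ^ p = b₁) :
    (a₀ / b₀ - s) ^ p = a₁ / b₀ * (b₀ * t ^ p / b₁) := by
  have hb₁ : b₁ ≠ 0 := e₃ ▸ pow_ne_zero p hb₀
  rw [sub_pow_char, div_pow, e₁, e₃, add_div, mul_div_cancel_left₀ _ hb₁, add_sub_cancel_right,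
    div_mul_div_comm, mul_left_comm, mul_div_mul_left _ _ hb₀]

theorem mul_div_pow_succ_sub_eq (ϖ : K) (ht : t ≠ 0) (hb₀ : b₀ ≠ 0) (hb₁ : b₁ ≠ 0)
    (e₁ : a₀ ^ p = a₁ * t ^ p + b₁ * s ^ p) (e₄ : b₁ ^ p = b₀ * t ^ p) :
    ϖ * (a₀ / b₁) ^ (p + 1) - ϖ * s ^ (p + 1) / t ^ p =
      ϖ * (a₀ / b₁) * (a₁ / b₀) + ϖ * (a₀ / b₀ - s) * s ^ p / t ^ p := by
  rw [div_pow, pow_succ a₀, pow_succ b₁, pow_succ s, e₁, e₄]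
  field_simp
  ring

theorem ord_b₀ (hord : IsRealAddValuation ord) (hp : 1 < p) (ht : t ≠ 0) (hb₀ : b₀ ≠ 0)
    (hordt : ord t = 1 / p) (e₃ : b₀ ^ p = b₁) (e₄ : b₁ ^ p = b₀ * t ^ p) :
    ord b₀ = 1 / ((p : ℝ) ^ 2 - 1) := by
  have hp' : (1 : ℝ) < p := by exact_mod_cast hp
  have h := congrArg ord (show b₀ ^ (p ^ 2) = b₀ * t ^ p by rw [sq, pow_mul, e₃, e₄])
  rw [hord.map_pow hb₀, hord.map_mul _ _ hb₀ (pow_ne_zero _ ht), hord.map_pow ht, hordt] at h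
  push_cast at h
  rw [eq_div_iff (by nlinarith)]
  field_simp at h
  linarith

theorem ord_a₁_div_b₀ (hord : IsRealAddValuation ord) (hp : 1 < p) (ht : t ≠ 0) (hs : s ≠ 0)
    (hb₀ : b₀ ≠ 0) (hordt : ord t = 1 / p) (hords : ord s = 0)
    (e₁ : a₀ ^ p = a₁ * t ^ p + b₁ * s ^ p) (e₂ : a₁ ^ p = a₀) (e₃ : b₀ ^ p = b₁)
    (e₄ : b₁ ^ p = b₀ * t ^ p) :
    ord (a₁ / b₀) = -1 / (p * (p + 1)) := by
  have hp' : (1 : ℝ) < p := by exact_mod_cast hp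
  have hq : (p : ℝ) ^ 2 - 1 ≠ 0 := by nlinarith
  have hsp : s ^ p ≠ 0 := pow_ne_zero _ hs
  have hb₀p : b₀ ^ (p * (p - 1)) ≠ 0 := pow_ne_zero _ hb₀
  have hordc : ord (s ^ p / b₀ ^ (p * (p - 1))) = -p / (p + 1) := by
    rw [hord.map_div hsp hb₀p, hord.map_pow hs, hord.map_pow hb₀, hords,
      ord_b₀ hord hp ht hb₀ hordt e₃ e₄, Nat.cast_mul, Nat.cast_pred (by omega)]
    field_simp
    ring
  have hx := hord.map_eq_div_of_pow_eq_add (by nlinarith)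
    (div_ne_zero (a₁_ne_zero (by omega) hs hb₀ e₁ e₂ e₃) hb₀) (div_ne_zero hsp hb₀p)
    (by rw [hordc, neg_div]; exact neg_neg_of_pos (by positivity))
    (div_pow_sq_eq_add hb₀ e₁ e₂ e₃ e₄)
  rw [hx, hordc]
  push_cast
  field_simp

theorem ord_a₀_div_b₁ (hord : IsRealAddValuation ord) (hp : 1 < p) (ht : t ≠ 0) (hs : s ≠ 0)
    (hb₀ : b₀ ≠ 0) (hordt : ord t = 1 / p) (hords : ord s = 0)
    (e₁ : a₀ ^ p = a₁ * t ^ p + b₁ * s ^ p) (e₂ : a₁ ^ p = a₀) (e₃ : b₀ ^ p = b₁)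
    (e₄ : b₁ ^ p = b₀ * t ^ p) :
    ord (a₀ / b₁) = -1 / (p + 1) := by
  have hp' : (1 : ℝ) < p := by exact_mod_cast hp
  have hx : a₁ / b₀ ≠ 0 := div_ne_zero (a₁_ne_zero (by omega) hs hb₀ e₁ e₂ e₃) hb₀
  rw [← e₂, ← e₃, ← div_pow, hord.map_pow hx,
    ord_a₁_div_b₀ hord hp ht hs hb₀ hordt hords e₁ e₂ e₃ e₄]
  field_simp

theorem ne_zero_and_ord_div_sub [CharP K p] (hord : IsRealAddValuation ord) (hp : p.Prime)
    (ht : t ≠ 0) (hs : s ≠ 0) (hb₀ : b₀ ≠ 0) (hordt : ord t = 1 / p) (hords : ord s = 0)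
    (e₁ : a₀ ^ p = a₁ * t ^ p + b₁ * s ^ p) (e₂ : a₁ ^ p = a₀) (e₃ : b₀ ^ p = b₁)
    (e₄ : b₁ ^ p = b₀ * t ^ p) :
    a₀ / b₀ - s ≠ 0 ∧ ord (a₀ / b₀ - s) = (p - 1) / p ^ 2 := by
  have : Fact p.Prime := ⟨hp⟩
  have hp' : (1 : ℝ) < p := by exact_mod_cast hp.one_lt
  have hq : (p : ℝ) ^ 2 - 1 ≠ 0 := by nlinarith
  have hx : a₁ / b₀ ≠ 0 := div_ne_zero (a₁_ne_zero hp.ne_zero hs hb₀ e₁ e₂ e₃) hb₀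
  have hb₁ : b₁ ≠ 0 := e₃ ▸ pow_ne_zero p hb₀
  have hy : b₀ * t ^ p ≠ 0 := mul_ne_zero hb₀ (pow_ne_zero p ht)
  have hd := div_sub_pow_eq (s := s) hb₀ e₁ e₃
  have hd₀ : a₀ / b₀ - s ≠ 0 := fun h₀ ↦ by
    rw [h₀, zero_pow hp.ne_zero] at hd
    exact mul_ne_zero hx (div_ne_zero hy hb₁) hd.symm
  refine ⟨hd₀, ?_⟩
  have h := hord.map_pow hd₀ p
  rw [hd, hord.map_mul _ _ hx (div_ne_zero hy hb₁), hord.map_div hy hb₁,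
    hord.map_mul _ _ hb₀ (pow_ne_zero p ht), hord.map_pow ht, ← e₃, hord.map_pow hb₀,
    ord_a₁_div_b₀ hord hp.one_lt ht hs hb₀ hordt hords e₁ e₂ e₃ e₄,
    ord_b₀ hord hp.one_lt ht hb₀ hordt e₃ e₄, hordt] at h
  generalize ord (a₀ / b₀ - s) = x at h ⊢
  rw [eq_div_iff (by positivity)]
  field_simp at h
  apply mul_left_cancel₀ (mul_ne_zero (by positivity : (p : ℝ) + 1 ≠ 0) hq)
  linear_combination -h

theorem eq_or_pos_ord_sub [CharP K p] (hord : IsRealAddValuation ord) (hp : p.Prime) {ϖ : K}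
    (ht : t ≠ 0) (hs : s ≠ 0) (hb₀ : b₀ ≠ 0) (hϖ : ϖ ≠ 0) (hordt : ord t = 1 / p)
    (hords : ord s = 0) (hordϖ : ord ϖ = 1)
    (e₁ : a₀ ^ p = a₁ * t ^ p + b₁ * s ^ p) (e₂ : a₁ ^ p = a₀) (e₃ : b₀ ^ p = b₁)
    (e₄ : b₁ ^ p = b₀ * t ^ p) :
    ϖ * (a₀ / b₁) ^ (p + 1) = ϖ * s ^ (p + 1) / t ^ p ∨
      0 < ord (ϖ * (a₀ / b₁) ^ (p + 1) - ϖ * s ^ (p + 1) / t ^ p) := by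
  rcases eq_or_ne (ϖ * (a₀ / b₁) ^ (p + 1) - ϖ * s ^ (p + 1) / t ^ p) 0 with h | h
  · exact Or.inl (sub_eq_zero.1 h)
  right
  have hp' : (1 : ℝ) < p := by exact_mod_cast hp.one_lt
  have ha₁ := a₁_ne_zero hp.ne_zero hs hb₀ e₁ e₂ e₃
  have hb₁ : b₁ ≠ 0 := e₃ ▸ pow_ne_zero p hb₀
  have ha₀ : a₀ ≠ 0 := e₂ ▸ pow_ne_zero p ha₁
  have hT₁ : ϖ * (a₀ / b₁) ≠ 0 := mul_ne_zero hϖ (div_ne_zero ha₀ hb₁)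
  obtain ⟨hd₀, hordd⟩ := ne_zero_and_ord_div_sub hord hp ht hs hb₀ hordt hords e₁ e₂ e₃ e₄
  have hT₂ : ϖ * (a₀ / b₀ - s) * s ^ p ≠ 0 := mul_ne_zero (mul_ne_zero hϖ hd₀) (pow_ne_zero p hs)
  rw [mul_div_pow_succ_sub_eq ϖ ht hb₀ hb₁ e₁ e₄] at h ⊢
  refine hord.pos_map_add (mul_ne_zero hT₁ (div_ne_zero ha₁ hb₀))
    (div_ne_zero hT₂ (pow_ne_zero p ht)) h ?_ ?_
  · rw [hord.map_mul _ _ hT₁ (div_ne_zero ha₁ hb₀), hord.map_mul _ _ hϖ (div_ne_zero ha₀ hb₁),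
      ord_a₀_div_b₁ hord hp.one_lt ht hs hb₀ hordt hords e₁ e₂ e₃ e₄,
      ord_a₁_div_b₀ hord hp.one_lt ht hs hb₀ hordt hords e₁ e₂ e₃ e₄, hordϖ,
      show 1 + -1 / ((p : ℝ) + 1) + -1 / (p * (p + 1)) = (p - 1) / p by field_simp; ring]
    exact div_pos (by linarith) (by linarith)
  · rw [hord.map_div hT₂ (pow_ne_zero p ht),
      hord.map_mul _ _ (mul_ne_zero hϖ hd₀) (pow_ne_zero p hs), hord.map_mul _ _ hϖ hd₀,
      hord.map_pow hs, hord.map_pow ht, hordd, hords, hordt, hordϖ,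
      show 1 + ((p : ℝ) - 1) / p ^ 2 + p * 0 - p * (1 / p) = (p - 1) / p ^ 2 by field_simp; ring]
    exact div_pos (by linarith) (by positivity)

end NonSuperspecial

theorem stmt10_general (p : ℕ) (hp : p.Prime) (K : Type*) [Field K] [CharP K p]
    (ord : K → ℝ)
    (hmul : ∀ x y : K, x ≠ 0 → y ≠ 0 → ord (x * y) = ord x + ord y)
    (hadd : ∀ x y : K, x ≠ 0 → y ≠ 0 → x + y ≠ 0 → min (ord x) (ord y) ≤ ord (x + y))
    (t s a₀ a₁ b₀ b₁ ϖ : K)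
    (ht : t ≠ 0) (hs : s ≠ 0) (hb₀ : b₀ ≠ 0) (hϖ : ϖ ≠ 0)
    (hordt : ord t = 1 / (p : ℝ)) (hords : ord s = 0) (hordϖ : ord ϖ = 1)
    (e₁ : a₀ ^ p = a₁ * t ^ p + b₁ * s ^ p)
    (e₂ : a₁ ^ p = a₀)
    (e₃ : b₀ ^ p = b₁)
    (e₄ : b₁ ^ p = b₀ * t ^ p) :
    ord (ϖ * (a₀ / b₁) ^ (p + 1)) = 0 ∧
    ord (ϖ * s ^ (p + 1) / t ^ p) = 0 ∧
    (ϖ * (a₀ / b₁) ^ (p + 1) = ϖ * s ^ (p + 1) / t ^ p ∨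
      0 < ord (ϖ * (a₀ / b₁) ^ (p + 1) - ϖ * s ^ (p + 1) / t ^ p)) := by
  have hord : IsRealAddValuation ord := ⟨hmul, hadd⟩
  have hp' : (0 : ℝ) < p := by exact_mod_cast hp.pos
  have hab : a₀ / b₁ ≠ 0 :=
    div_ne_zero (e₂ ▸ pow_ne_zero p (a₁_ne_zero hp.ne_zero hs hb₀ e₁ e₂ e₃))
      (e₃ ▸ pow_ne_zero p hb₀)
  refine ⟨?_, ?_, eq_or_pos_ord_sub hord hp ht hs hb₀ hϖ hordt hords hordϖ e₁ e₂ e₃ e₄⟩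
  · rw [hord.map_mul _ _ hϖ (pow_ne_zero _ hab), hord.map_pow hab,
      ord_a₀_div_b₁ hord hp.one_lt ht hs hb₀ hordt hords e₁ e₂ e₃ e₄, hordϖ]
    push_cast
    field_simp
    ring
  · rw [hord.map_div (mul_ne_zero hϖ (pow_ne_zero _ hs)) (pow_ne_zero _ ht),
      hord.map_mul _ _ hϖ (pow_ne_zero _ hs), hord.map_pow hs, hord.map_pow ht, hords, hordt,
      hordϖ]
    field_simp
    ring

/-- Lemma 3.4.3 of the paper.  `K` is the fraction field of a rank-1 valuation
ring of characteristic `p` (such as `𝒪^♭`), with additive valuation `ord`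
(real-valued on nonzero elements; the listed ring elements have `ord ≥ 0`).
Suppose `t, s, a₀, a₁, b₀, b₁` satisfy `a₀^p = a₁t^p + b₁s^p`, `a₁^p = a₀`,
`b₀^p = b₁`, `b₁^p = b₀t^p`, with `ord t = 1/p`, `ord s = 0` (the
non-superspecial case) and `b₀ ≠ 0`.  Then for any `ϖ` with `ord ϖ = 1`, the
elements `ϖ(a₀/b₁)^(p+1)` and `ϖs^(p+1)/t^p` are units (valuation `0`) with
the same reduction to the residue field (their difference has positive
valuation, or they are equal). -/
theorem stmt10 (p : ℕ) (hp : p.Prime) (K : Type*) [Field K] [CharP K p]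
    (ord : K → ℝ)
    (hmul : ∀ x y : K, x ≠ 0 → y ≠ 0 → ord (x * y) = ord x + ord y)
    (hadd : ∀ x y : K, x ≠ 0 → y ≠ 0 → x + y ≠ 0 → min (ord x) (ord y) ≤ ord (x + y))
    (t s a₀ a₁ b₀ b₁ ϖ : K)
    (ht : t ≠ 0) (hs : s ≠ 0) (hb₀ : b₀ ≠ 0) (hϖ : ϖ ≠ 0)
    (hnonneg : ∀ x ∈ ({t, s, a₀, a₁, b₀, b₁} : Set K), x ≠ 0 → 0 ≤ ord x)
    (hordt : ord t = 1 / (p : ℝ)) (hords : ord s = 0) (hordϖ : ord ϖ = 1)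
    (e₁ : a₀ ^ p = a₁ * t ^ p + b₁ * s ^ p)
    (e₂ : a₁ ^ p = a₀)
    (e₃ : b₀ ^ p = b₁)
    (e₄ : b₁ ^ p = b₀ * t ^ p) :
    ord (ϖ * (a₀ / b₁) ^ (p + 1)) = 0 ∧
    ord (ϖ * s ^ (p + 1) / t ^ p) = 0 ∧
    (ϖ * (a₀ / b₁) ^ (p + 1) = ϖ * s ^ (p + 1) / t ^ p ∨
      0 < ord (ϖ * (a₀ / b₁) ^ (p + 1) - ϖ * s ^ (p + 1) / t ^ p)) :=
  stmt10_general p hp K ord hmul hadd t s a₀ a₁ b₀ b₁ ϖ ht hs hb₀ hϖ hordt hords hordϖ e₁ e₂ e₃ e₄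
end

section
/- Let p be a prime and ζ_{p^{ℓ+1}} a compatible system of p-power roots of unity in ℂ_p. Then ((ζ_{p^ℓ}-1)/(ζ_{p^{ℓ+1}}-1))^{p^ℓ} ≡ (ζ_{p^{ℓ+1}} - 1)^{(p-1)p^ℓ} modulo p^{ℓ-1}𝒪, where 𝒪 is the ring of integers of ℂ_p. -/
open Polynomial in
lemma key_dvd (p : ℕ) (hp : p.Prime) {R : Type*} [CommRing R] (ζ : R) :
    (p : R) ∣ (∑ j ∈ Finset.range p, ζ ^ j) - (ζ - 1) ^ (p - 1) := by
  haveI : Fact p.Prime := ⟨hp⟩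
  set F : ℤ[X] := (∑ j ∈ Finset.range p, X ^ j) - (X - 1) ^ (p - 1) with hF
  have hmap : F.map (Int.castRingHom (ZMod p)) = 0 := by
    have h1 : ((∑ j ∈ Finset.range p, (X : (ZMod p)[X]) ^ j) - (X - 1) ^ (p - 1))
        * (X - 1) = 0 := by
      rw [sub_mul, geom_sum_mul, ← pow_succ, Nat.sub_add_cancel hp.one_lt.le,
        sub_pow_char, one_pow, sub_self]
    have h2 : (X - 1 : (ZMod p)[X]) ≠ 0 := by
      simpa using X_sub_C_ne_zero (1 : ZMod p)
    have := mul_eq_zero.mp h1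
    simp only [hF, Polynomial.map_sub, Polynomial.map_pow, Polynomial.map_sum,
      Polynomial.map_one, Polynomial.map_X]
    tauto
  have hdvd : (C (p : ℤ)) ∣ F := by
    rw [C_dvd_iff_dvd_coeff]
    intro i
    have := congrArg (fun q => Polynomial.coeff q i) hmap
    simpa [Polynomial.coeff_map, ZMod.intCast_zmod_eq_zero_iff_dvd] using this
  obtain ⟨G, hG⟩ := hdvd
  refine ⟨aeval ζ G, ?_⟩
  have := congrArg (aeval ζ) hG
  simpa [hF, map_sum] using this

/-- Equation (2.1.2) of the paper.  Let `p` be a prime, `ℓ ≥ 1`, and `ζ` a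
primitive `p^(ℓ+1)`-th root of unity (in the ring of integers of `ℂ_p`, or any
commutative ring), so that `ζ^p` is the compatible primitive `p^ℓ`-th root of
unity and `x_ℓ := (ζ^p - 1)/(ζ - 1) = 1 + ζ + ⋯ + ζ^(p-1)`.  Then
`x_ℓ^(p^ℓ) ≡ (ζ - 1)^((p-1)p^ℓ)` modulo `p^(ℓ-1)`. -/
theorem stmt15 (p ℓ : ℕ) (hp : p.Prime) (hℓ : 1 ≤ ℓ)
    (O : Type*) [CommRing O] (ζ : O) (hζ : IsPrimitiveRoot ζ (p ^ (ℓ + 1))) :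
    ∃ s : O, (∑ j ∈ Finset.range p, ζ ^ j) ^ (p ^ ℓ) -
      (ζ - 1) ^ ((p - 1) * p ^ ℓ) = (p : O) ^ (ℓ - 1) * s := by
  have h := dvd_sub_pow_of_dvd_sub (key_dvd p hp ζ) ℓ
  rw [← pow_mul] at h
  have h2 : (p : O) ^ (ℓ - 1) ∣ (p : O) ^ (ℓ + 1) :=
    pow_dvd_pow _ (by omega)
  obtain ⟨s, hs⟩ := h2.trans h
  exact ⟨s, hs⟩
end
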